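/- Under the hypotheses of the compositional invariant rule, if additionally every tuple (c, u₁, ..., u_k) with c ∈ θ_C and (c, uⱼ) ∈ θ_U for all j satisfies a k-user predicate φ, then every N-user SCUN instance satisfies φ as a k-universal safety property: for every reachable state (c, u) and every k-element subset {i₁,...,i_k} of [N], φ(c, u_{i₁},...,u_{i_k}) holds. -/

import Mathlib

/-!
The predicates `θC` on the controller and `θU` on each user, conjoined over all users, form an
inductive invariant of every `N`-user instance: Consecution handles the user that moves (or
the controller alone), and Non-Interference handles every user that does not. Restricting the
invariant to any `k` users then yields `φ`.
-/

/-- Reachability in the `N`-user instance of a synchronized control-user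
network (SCUN). -/
inductive ScunReach {SC SU PI PS : Type*}
    (TI : SC → PI → SC) (TS : SC → SU → PS → SC × SU)
    (c₀ : SC) (u₀ : SU) (N : ℕ) : SC × (Fin N → SU) → Prop
  | init : ScunReach TI TS c₀ u₀ N (c₀, fun _ => u₀)
  | internal {c : SC} {u : Fin N → SU} (p : PI) :
      ScunReach TI TS c₀ u₀ N (c, u) → ScunReach TI TS c₀ u₀ N (TI c p, u)
  | sync {c : SC} {u : Fin N → SU} (p : PS) (i : Fin N) :
      ScunReach TI TS c₀ u₀ N (c, u) →
      ScunReach TI TS c₀ u₀ N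
        ((TS c (u i) p).1, Function.update u i (TS c (u i) p).2)

section CompositionalInvariant

variable {SC SU PI PS : Type*} {N : ℕ}

/-- The invariant also asserts `θU` of the initial user state `u₀`, a phantom user that keeps
Consecution applicable to controller steps when `N = 0`. -/
def ScunInvariant (θC : SC → Prop) (θU : SC → SU → Prop) (u₀ : SU)
    (s : SC × (Fin N → SU)) : Prop :=
  θC s.1 ∧ θU s.1 u₀ ∧ ∀ i, θU s.1 (s.2 i)

variable {θC : SC → Prop} {θU : SC → SU → Prop} {u₀ : SU}

theorem scunInvariant_init {c₀ : SC} (hInit : θC c₀ ∧ θU c₀ u₀) :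
    ScunInvariant (N := N) θC θU u₀ (c₀, fun _ => u₀) :=
  ⟨hInit.1, hInit.2, fun _ => hInit.2⟩

theorem ScunInvariant.internal {TI : SC → PI → SC} {c : SC} {u : Fin N → SU}
    (hCons2 : ∀ c u p, θC c → θU c u → θC (TI c p) ∧ θU (TI c p) u)
    (h : ScunInvariant θC θU u₀ (c, u)) (p : PI) :
    ScunInvariant θC θU u₀ (TI c p, u) := by
  obtain ⟨hc, h₀, hu⟩ := h
  exact ⟨(hCons2 c u₀ p hc h₀).1, (hCons2 c u₀ p hc h₀).2, fun i => (hCons2 c _ p hc (hu i)).2⟩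

theorem ScunInvariant.sync {TS : SC → SU → PS → SC × SU} {c : SC} {u : Fin N → SU}
    (hCons1 : ∀ c u p, θC c → θU c u →
      θC (TS c u p).1 ∧ θU (TS c u p).1 (TS c u p).2)
    (hNonInt : ∀ c u v p, θC c → θU c u → θU c v → θU (TS c u p).1 v)
    (h : ScunInvariant θC θU u₀ (c, u)) (p : PS) (i : Fin N) :
    ScunInvariant θC θU u₀
      ((TS c (u i) p).1, Function.update u i (TS c (u i) p).2) := by
  obtain ⟨hc, h₀, hu⟩ := h
  refine ⟨(hCons1 c _ p hc (hu i)).1, hNonInt c _ _ p hc (hu i) h₀, fun j => ?_⟩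
  rcases eq_or_ne j i with rfl | hne
  · simpa using (hCons1 c _ p hc (hu j)).2
  · simpa [Function.update_of_ne hne] using hNonInt c _ _ p hc (hu i) (hu j)

theorem ScunReach.scunInvariant {TI : SC → PI → SC} {TS : SC → SU → PS → SC × SU} {c₀ : SC}
    {s : SC × (Fin N → SU)}
    (hInit : θC c₀ ∧ θU c₀ u₀)
    (hCons1 : ∀ c u p, θC c → θU c u →
      θC (TS c u p).1 ∧ θU (TS c u p).1 (TS c u p).2)
    (hCons2 : ∀ c u p, θC c → θU c u → θC (TI c p) ∧ θU (TI c p) u)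
    (hNonInt : ∀ c u v p, θC c → θU c u → θU c v → θU (TS c u p).1 v)
    (h : ScunReach TI TS c₀ u₀ N s) : ScunInvariant θC θU u₀ s := by
  induction h with
  | init => exact scunInvariant_init hInit
  | internal p _ ih => exact ih.internal hCons2 p
  | sync p i _ ih => exact ih.sync hCons1 hNonInt p i

end CompositionalInvariant

/-- Under Initialization, Consecution (synchronized and internal) and
Non-Interference for `(θC, θU)`, if every tuple `(c, u₁, …, u_k)` with
`θC c` and `θU c uⱼ` for all `j` satisfies the `k`-user predicate `φ`, then
every `N`-user SCUN instance satisfies `φ` as a `k`-universal safety property: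
for every reachable state `(c, u)` and every `k`-element subset of users
(given by an injective `idx : Fin k → Fin N`), `φ c (u ∘ idx)` holds. -/
theorem stmt_8 {SC SU PI PS : Type*} (k : ℕ)
    (TI : SC → PI → SC) (TS : SC → SU → PS → SC × SU)
    (c₀ : SC) (u₀ : SU)
    (θC : SC → Prop) (θU : SC → SU → Prop)
    (φ : SC → (Fin k → SU) → Prop)
    (hInit : θC c₀ ∧ θU c₀ u₀)
    (hCons1 : ∀ c u p, θC c → θU c u →
      θC (TS c u p).1 ∧ θU (TS c u p).1 (TS c u p).2)
    (hCons2 : ∀ c u p, θC c → θU c u → θC (TI c p) ∧ θU (TI c p) u)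
    (hNonInt : ∀ c u v p, θC c → θU c u → θU c v → θU (TS c u p).1 v)
    (hφ : ∀ (c : SC) (us : Fin k → SU), θC c → (∀ j, θU c (us j)) → φ c us) :
    ∀ (N : ℕ) (c : SC) (u : Fin N → SU),
      ScunReach TI TS c₀ u₀ N (c, u) →
      ∀ idx : Fin k → Fin N, Function.Injective idx →
        φ c (fun j => u (idx j)) := by
  intro N c u hreach idx _
  obtain ⟨hc, -, hu⟩ := hreach.scunInvariant hInit hCons1 hCons2 hNonInt
  exact hφ c _ hc fun j => hu (idx j)
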